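/- arXiv:1408.3127 — 6 statements merged into one kernel-verified Lean document; each statement's English description precedes it below -/
import Mathlib

section
/- The map y : 2^ℕ → 2^ℕ, defined corecursively together with a map y' by y(0⁀0⁀η) = 0⁀y(η), y(0⁀1⁀η) = 1⁀0⁀y'(η), y(1⁀η) = 1⁀1⁀y(η), and y'(0⁀η) = 0⁀0⁀y'(η), y'(1⁀0⁀η) = 0⁀1⁀y(η), y'(1⁀1⁀η) = 1⁀y'(η), satisfies y ∘ y' = id and y' ∘ y = id on 2^ℕ; in particular y is a bijection of 2^ℕ with inverse y'. -/
open Stream'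

/-- The corecursively defined maps `y`, `y'` on infinite binary sequences
(`y(00η) = 0 y(η)`, `y(01η) = 10 y'(η)`, `y(1η) = 11 y(η)`;
`y'(0η) = 00 y'(η)`, `y'(10η) = 01 y(η)`, `y'(11η) = 1 y'(η)`)
satisfy `y ∘ y' = id` and `y' ∘ y = id`; in particular `y` is a bijection with
inverse `y'`. -/
theorem y_bijective (y y' : Stream' Bool → Stream' Bool)
    (hy00 : ∀ η, y (cons false (cons false η)) = cons false (y η))
    (hy01 : ∀ η, y (cons false (cons true η)) = cons true (cons false (y' η)))
    (hy1 : ∀ η, y (cons true η) = cons true (cons true (y η)))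
    (hz0 : ∀ η, y' (cons false η) = cons false (cons false (y' η)))
    (hz10 : ∀ η, y' (cons true (cons false η)) = cons false (cons true (y η)))
    (hz11 : ∀ η, y' (cons true (cons true η)) = cons true (y' η)) :
    y ∘ y' = id ∧ y' ∘ y = id ∧ Function.Bijective y := by
  have key : ∀ n η, (y (y' η)).get n = η.get n ∧ (y' (y η)).get n = η.get n := by
    intro n
    induction n using Nat.strong_induction_on with
    | _ n ih =>
      intro η
      have hη : η = cons η.head η.tail := (Stream'.eta η).symm
      have hη2 : η.tail = cons η.tail.head η.tail.tail := (Stream'.eta η.tail).symm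
      constructor
      · cases hb : η.head with
        | false =>
          rw [hη, hb, hz0, hy00]
          rcases n with _ | n
          · rfl
          · simpa using (ih n (by omega) η.tail).1
        | true =>
          cases hb2 : η.tail.head with
          | false =>
            rw [hη, hη2, hb, hb2, hz10, hy01]
            rcases n with _ | _ | n
            · rfl
            · rfl
            · simpa using (ih n (by omega) η.tail.tail).2
          | true =>
            rw [hη, hη2, hb, hb2, hz11, hy1]
            rcases n with _ | _ | n
            · rfl
            · rfl
            · simpa using (ih n (by omega) η.tail.tail).1
      · cases hb : η.head with
        | false =>
          cases hb2 : η.tail.head with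
          | false =>
            rw [hη, hη2, hb, hb2, hy00, hz0]
            rcases n with _ | _ | n
            · rfl
            · rfl
            · simpa using (ih n (by omega) η.tail.tail).2
          | true =>
            rw [hη, hη2, hb, hb2, hy01, hz10]
            rcases n with _ | _ | n
            · rfl
            · rfl
            · simpa using (ih n (by omega) η.tail.tail).1
        | true =>
          rw [hη, hb, hy1, hz11]
          rcases n with _ | n
          · rfl
          · simpa using (ih n (by omega) η.tail).2
  have k1 : ∀ η, y (y' η) = η := fun η => Stream'.ext fun n => (key n η).1
  have k2 : ∀ η, y' (y η) = η := fun η => Stream'.ext fun n => (key n η).2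
  exact ⟨funext k1, funext k2, Function.bijective_iff_has_inverse.2 ⟨y', k2, k1⟩⟩
end

section
/- Let σ : 2^ℕ → 2^ℕ be the bit-flip involution, σ(ξ)(n) = 1 − ξ(n). Then σ ∘ y ∘ σ = y', i.e. conjugating y by the bit-flip involution yields the inverse map y'. -/
open Stream'

/-- The bit-flip involution of `2^ℕ`. -/
def flipBits (ξ : Stream' Bool) : Stream' Bool := fun n => !(ξ.get n)

lemma flipBits_cons (b : Bool) (s : Stream' Bool) :
    flipBits (cons b s) = cons (!b) (flipBits s) := by
  funext n
  cases n with
  | zero => rfl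
  | succ n => rfl

/-- Conjugating `y` by the bit-flip involution yields its inverse `y'`:
`σ ∘ y ∘ σ = y'`. -/
theorem flip_conj_y (y y' : Stream' Bool → Stream' Bool)
    (hy00 : ∀ η, y (cons false (cons false η)) = cons false (y η))
    (hy01 : ∀ η, y (cons false (cons true η)) = cons true (cons false (y' η)))
    (hy1 : ∀ η, y (cons true η) = cons true (cons true (y η)))
    (hz0 : ∀ η, y' (cons false η) = cons false (cons false (y' η)))
    (hz10 : ∀ η, y' (cons true (cons false η)) = cons false (cons true (y η)))
    (hz11 : ∀ η, y' (cons true (cons true η)) = cons true (y' η)) :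
    flipBits ∘ y ∘ flipBits = y' := by
  have key : ∀ n : ℕ, (∀ η, (flipBits (y (flipBits η))).get n = (y' η).get n) ∧
      (∀ η, (flipBits (y' (flipBits η))).get n = (y η).get n) := by
    intro n
    induction n using Nat.strong_induction_on with
    | _ n ih =>
      constructor
      · intro η
        cases hb : η.head
        · -- η = 0 t
          have hη : η = cons false η.tail := by rw [← hb]; exact (Stream'.eta η).symm
          rw [hη, flipBits_cons, Bool.not_false, hy1, flipBits_cons, flipBits_cons,
            Bool.not_true, hz0]
          match n with
          | 0 => rfl
          | 1 => rfl
          | (k+2) =>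
            simp only [get_succ_cons]
            exact (ih k (by omega)).1 η.tail
        · have hη : η = cons true (cons η.tail.head η.tail.tail) := by
            rw [← hb, Stream'.eta, Stream'.eta]
          cases hb' : η.tail.head
          · -- η = 1 0 t
            rw [hb'] at hη
            rw [hη, flipBits_cons, flipBits_cons, Bool.not_true, Bool.not_false,
              hy01, flipBits_cons, flipBits_cons, hz10]
            match n with
            | 0 => rfl
            | 1 => rfl
            | (k+2) =>
              simp only [get_succ_cons]
              exact (ih k (by omega)).2 η.tail.tail
          · -- η = 1 1 t
            rw [hb'] at hη
            rw [hη, flipBits_cons, flipBits_cons, Bool.not_true,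
              hy00, flipBits_cons, hz11]
            match n with
            | 0 => rfl
            | (k+1) =>
              simp only [get_succ_cons]
              exact (ih k (by omega)).1 η.tail.tail
      · intro η
        cases hb : η.head
        · have hη : η = cons false (cons η.tail.head η.tail.tail) := by
            rw [← hb, Stream'.eta, Stream'.eta]
          cases hb' : η.tail.head
          · -- η = 0 0 t
            rw [hb'] at hη
            rw [hη, flipBits_cons, flipBits_cons, Bool.not_false,
              hz11, flipBits_cons, Bool.not_true, hy00]
            match n with
            | 0 => rfl
            | (k+1) =>
              simp only [get_succ_cons]
              exact (ih k (by omega)).2 η.tail.tail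
          · -- η = 0 1 t
            rw [hb'] at hη
            rw [hη, flipBits_cons, flipBits_cons, Bool.not_false, Bool.not_true,
              hz10, flipBits_cons, flipBits_cons, hy01]
            match n with
            | 0 => rfl
            | 1 => rfl
            | (k+2) =>
              simp only [get_succ_cons]
              exact (ih k (by omega)).1 η.tail.tail
        · -- η = 1 t
          have hη : η = cons true η.tail := by rw [← hb]; exact (Stream'.eta η).symm
          rw [hη, flipBits_cons, Bool.not_true, hz0, flipBits_cons, flipBits_cons,
            Bool.not_false, hy1]
          match n with
          | 0 => rfl
          | 1 => rfl
          | (k+2) =>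
            simp only [get_succ_cons]
            exact (ih k (by omega)).2 η.tail
  funext η
  exact Stream'.ext fun n => (key n).1 η
end

section
/- The relation y = x · y_{⟨0⟩} · y_{⟨1,0⟩}⁻¹ · y_{⟨1,1⟩} holds as right actions on 2^ℕ: for every infinite binary sequence ξ, y(ξ) = y_{⟨1,1⟩}( y_{⟨1,0⟩}⁻¹ ( y_{⟨0⟩} ( x(ξ) ) ) ). -/
open Stream'

/-- The relation `y = x · y_{⟨0⟩} · y_{⟨1,0⟩}⁻¹ · y_{⟨1,1⟩}` holds as right actions on
`2^ℕ`: for every `ξ`, `y(ξ) = y_{⟨1,1⟩}(y_{⟨1,0⟩}⁻¹(y_{⟨0⟩}(x(ξ))))`. -/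
theorem y_eq_x_word (x y y' y0 y10inv y11 : Stream' Bool → Stream' Bool)
    (hx00 : ∀ η, x (cons false (cons false η)) = cons false η)
    (hx01 : ∀ η, x (cons false (cons true η)) = cons true (cons false η))
    (hx1 : ∀ η, x (cons true η) = cons true (cons true η))
    (hy00 : ∀ η, y (cons false (cons false η)) = cons false (y η))
    (hy01 : ∀ η, y (cons false (cons true η)) = cons true (cons false (y' η)))
    (hy1 : ∀ η, y (cons true η) = cons true (cons true (y η)))
    (hz0 : ∀ η, y' (cons false η) = cons false (cons false (y' η)))
    (hz10 : ∀ η, y' (cons true (cons false η)) = cons false (cons true (y η)))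
    (hz11 : ∀ η, y' (cons true (cons true η)) = cons true (y' η))
    -- `y0` is the localization of `y` at the prefix ⟨0⟩
    (h0a : ∀ η, y0 (cons false η) = cons false (y η))
    (h0b : ∀ η, y0 (cons true η) = cons true η)
    -- `y10inv` is the localization of `y⁻¹ = y'` at the prefix ⟨1,0⟩
    (h10a : ∀ η, y10inv (cons true (cons false η)) = cons true (cons false (y' η)))
    (h10b : ∀ η, y10inv (cons false η) = cons false η)
    (h10c : ∀ η, y10inv (cons true (cons true η)) = cons true (cons true η))
    -- `y11` is the localization of `y` at the prefix ⟨1,1⟩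
    (h11a : ∀ η, y11 (cons true (cons true η)) = cons true (cons true (y η)))
    (h11b : ∀ η, y11 (cons false η) = cons false η)
    (h11c : ∀ η, y11 (cons true (cons false η)) = cons true (cons false η)) :
    ∀ ξ : Stream' Bool, y ξ = y11 (y10inv (y0 (x ξ))) := by
  intro ξ
  rw [← ξ.eta]
  cases h1 : ξ.head with
  | true => rw [hx1, h0b, h10c, h11a, hy1]
  | false =>
    rw [← ξ.tail.eta]
    cases h2 : ξ.tail.head with
    | false => rw [hx00, h0a, h10b, h11b, hy00]
    | true => rw [hx01, h0b, h10a, h11c, hy01]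
end

section
/- For any finite binary sequence s, the relation x_s² = x_{s⁀0} · x_s · x_{s⁀1} holds as right actions on 2^ℕ: for every ξ ∈ 2^ℕ, x_s(x_s(ξ)) = x_{s⁀1}( x_s ( x_{s⁀0}(ξ) ) ). -/
open Stream'

private lemma app_cons (s : List Bool) (b : Bool) (η : Stream' Bool) :
    (s ++ [b]) ++ₛ η = s ++ₛ cons b η := by
  rw [Stream'.append_append_stream, Stream'.cons_append_stream, Stream'.nil_append_stream]

private lemma app_inj (s : List Bool) {α β : Stream' Bool} (h : s ++ₛ α = s ++ₛ β) : α = β := by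
  have := congrArg (Stream'.drop s.length) h
  simpa [Stream'.drop_append_stream] using this

private lemma not_app (s : List Bool) (b : Bool) (α : Stream' Bool) :
    ¬ ∃ γ, s ++ₛ cons b α = (s ++ [!b]) ++ₛ γ := by
  rintro ⟨γ, h⟩
  rw [app_cons] at h
  have h2 := congrArg Stream'.head (app_inj s h)
  simp [Stream'.head_cons] at h2

private lemma decomp (η : Stream' Bool) : ∃ b η', η = cons b η' :=
  ⟨η.head, η.tail, (Stream'.eta η).symm⟩

/-- For any finite binary sequence `s`, the relation `x_s² = x_{s⁀0} · x_s · x_{s⁀1}`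
holds as right actions on `2^ℕ`: for every `ξ`, `x_s(x_s(ξ)) = x_{s⁀1}(x_s(x_{s⁀0}(ξ)))`. -/
theorem xs_squared (x xs xs0 xs1 : Stream' Bool → Stream' Bool)
    (hx00 : ∀ η, x (cons false (cons false η)) = cons false η)
    (hx01 : ∀ η, x (cons false (cons true η)) = cons true (cons false η))
    (hx1 : ∀ η, x (cons true η) = cons true (cons true η))
    (s : List Bool)
    (hxsa : ∀ η : Stream' Bool, xs (s ++ₛ η) = s ++ₛ x η)
    (hxsb : ∀ ξ : Stream' Bool, (¬ ∃ η, ξ = s ++ₛ η) → xs ξ = ξ)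
    (hxs0a : ∀ η : Stream' Bool, xs0 ((s ++ [false]) ++ₛ η) = (s ++ [false]) ++ₛ x η)
    (hxs0b : ∀ ξ : Stream' Bool, (¬ ∃ η, ξ = (s ++ [false]) ++ₛ η) → xs0 ξ = ξ)
    (hxs1a : ∀ η : Stream' Bool, xs1 ((s ++ [true]) ++ₛ η) = (s ++ [true]) ++ₛ x η)
    (hxs1b : ∀ ξ : Stream' Bool, (¬ ∃ η, ξ = (s ++ [true]) ++ₛ η) → xs1 ξ = ξ) :
    ∀ ξ : Stream' Bool, xs (xs ξ) = xs1 (xs (xs0 ξ)) := by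
  intro ξ
  by_cases hs : ∃ η, ξ = s ++ₛ η
  · obtain ⟨η, rfl⟩ := hs
    obtain ⟨b, η, rfl⟩ := decomp η
    cases b
    · obtain ⟨c, ζ, rfl⟩ := decomp η
      cases c
      · -- η = 0 0 ζ
        obtain ⟨d, ζ, rfl⟩ := decomp ζ
        cases d
        · -- 0 0 0 ζ
          rw [hxsa, hx00, hxsa, hx00]
          conv_rhs => rw [← app_cons, hxs0a, hx00, app_cons, hxsa, hx00,
            hxs1b _ (by simpa using not_app s false ζ)]
        · -- 0 0 1 ζ
          rw [hxsa, hx00, hxsa, hx01]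
          conv_rhs => rw [← app_cons, hxs0a, hx01, app_cons, hxsa, hx01,
            ← app_cons, hxs1a, hx00, app_cons]
      · -- η = 0 1 ζ
        rw [hxsa, hx01, hxsa, hx1]
        conv_rhs => rw [← app_cons, hxs0a, hx1, app_cons, hxsa, hx01,
          ← app_cons, hxs1a, hx01, app_cons]
    · -- η = 1 η
      rw [hxsa, hx1, hxsa, hx1]
      conv_rhs => rw [hxs0b _ (by simpa using not_app s true η), hxsa, hx1,
        ← app_cons, hxs1a, hx1, app_cons]
  · have h0 : ¬ ∃ γ, ξ = (s ++ [false]) ++ₛ γ := by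
      rintro ⟨γ, rfl⟩; exact hs ⟨cons false γ, app_cons s false γ⟩
    have h1 : ¬ ∃ γ, ξ = (s ++ [true]) ++ₛ γ := by
      rintro ⟨γ, rfl⟩; exact hs ⟨cons true γ, app_cons s true γ⟩
    rw [hxs0b _ h0, hxsb _ hs, hxsb _ hs, hxs1b _ h1]
end

section
/- Let s, t be finite binary sequences such that t = s⁀u where u has one of the prefixes 00, 01, 1, and let t·x_s = s⁀x̂(u), where x̂(00u') = 0u', x̂(01u') = 10u', x̂(1u') = 11u'. Then the relation y_t · x_s = x_s · y_{t·x_s} holds as right actions on 2^ℕ: for all ξ, x_s(y_t(ξ)) = y_{t·x_s}(x_s(ξ)). -/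
open Stream'

private lemma apps_cancel (s : List Bool) {a b : Stream' Bool}
    (h : s ++ₛ a = s ++ₛ b) : a = b := by
  induction s with
  | nil => simpa [Stream'.nil_append_stream] using h
  | cons c l ih =>
    apply ih
    have := congrArg Stream'.tail h
    simpa [Stream'.cons_append_stream] using this

private lemma stream_split (η : Stream' Bool) : ∃ b σ, η = cons b σ :=
  ⟨η.head, η.tail, (Stream'.eta η).symm⟩

/-- If `t = s⁀u` where `u` begins with `00`, `01` or `1`, and `t·x_s = s⁀x̂(u)` is obtained
by replacing the prefix of `u` according to `00 ↦ 0`, `01 ↦ 10`, `1 ↦ 11`, then the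
relation `y_t · x_s = x_s · y_{t·x_s}` holds as right actions on `2^ℕ`:
for all `ξ`, `x_s(y_t(ξ)) = y_{t·x_s}(x_s(ξ))`. -/
theorem yt_xs_rearrange (x y xs yt yt' : Stream' Bool → Stream' Bool)
    (hx00 : ∀ η, x (cons false (cons false η)) = cons false η)
    (hx01 : ∀ η, x (cons false (cons true η)) = cons true (cons false η))
    (hx1 : ∀ η, x (cons true η) = cons true (cons true η))
    (s u t t' : List Bool)
    (ht : t = s ++ u)
    (hu : ∃ u' : List Bool,
      (u = false :: false :: u' ∧ t' = s ++ (false :: u')) ∨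
      (u = false :: true :: u' ∧ t' = s ++ (true :: false :: u')) ∨
      (u = true :: u' ∧ t' = s ++ (true :: true :: u')))
    (hxsa : ∀ η : Stream' Bool, xs (s ++ₛ η) = s ++ₛ x η)
    (hxsb : ∀ ξ : Stream' Bool, (¬ ∃ η, ξ = s ++ₛ η) → xs ξ = ξ)
    (hyta : ∀ η : Stream' Bool, yt (t ++ₛ η) = t ++ₛ y η)
    (hytb : ∀ ξ : Stream' Bool, (¬ ∃ η, ξ = t ++ₛ η) → yt ξ = ξ)
    (hyt'a : ∀ η : Stream' Bool, yt' (t' ++ₛ η) = t' ++ₛ y η)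
    (hyt'b : ∀ ξ : Stream' Bool, (¬ ∃ η, ξ = t' ++ₛ η) → yt' ξ = ξ) :
    ∀ ξ : Stream' Bool, xs (yt ξ) = yt' (xs ξ) := by
  obtain ⟨u', hu⟩ := hu
  intro ξ
  by_cases hs : ∃ η, ξ = s ++ₛ η
  · obtain ⟨η, rfl⟩ := hs
    rcases hu with ⟨hu1, ht'⟩ | ⟨hu1, ht'⟩ | ⟨hu1, ht'⟩ <;> subst hu1 ht' ht
    · -- u = ff :: ff :: u'
      have key : ∀ σ : Stream' Bool,
          (s ++ (false :: false :: u')) ++ₛ σ = s ++ₛ cons false (cons false (u' ++ₛ σ)) := by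
        intro σ; rw [Stream'.append_append_stream]; simp [Stream'.cons_append_stream]
      have key' : ∀ σ : Stream' Bool,
          (s ++ (false :: u')) ++ₛ σ = s ++ₛ cons false (u' ++ₛ σ) := by
        intro σ; rw [Stream'.append_append_stream]; simp [Stream'.cons_append_stream]
      by_cases hρ : ∃ ρ, η = cons false (cons false (u' ++ₛ ρ))
      · obtain ⟨ρ, rfl⟩ := hρ
        rw [← key, hyta, key (y ρ), key ρ, hxsa, hxsa, hx00, hx00,
          ← key' (y ρ), ← key' ρ, hyt'a]
      · have h1 : yt (s ++ₛ η) = s ++ₛ η := by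
          refine hytb _ ?_
          rintro ⟨ρ, hρ2⟩
          rw [key] at hρ2
          exact hρ ⟨ρ, apps_cancel s hρ2⟩
        rw [h1, hxsa]
        refine (hyt'b _ ?_).symm
        rintro ⟨ρ, hρ2⟩
        rw [key'] at hρ2
        have hx := apps_cancel s hρ2
        obtain ⟨b1, η1, rfl⟩ := stream_split η
        cases b1
        · obtain ⟨b2, η2, rfl⟩ := stream_split η1
          cases b2
          · rw [hx00] at hx
            have := congrArg Stream'.tail hx
            simp only [Stream'.tail_cons] at this
            exact hρ ⟨ρ, by rw [this]⟩
          · rw [hx01] at hx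
            simpa using congrArg Stream'.head hx
        · rw [hx1] at hx
          simpa using congrArg Stream'.head hx
    · -- u = ff :: tt :: u'
      have key : ∀ σ : Stream' Bool,
          (s ++ (false :: true :: u')) ++ₛ σ = s ++ₛ cons false (cons true (u' ++ₛ σ)) := by
        intro σ; rw [Stream'.append_append_stream]; simp [Stream'.cons_append_stream]
      have key' : ∀ σ : Stream' Bool,
          (s ++ (true :: false :: u')) ++ₛ σ = s ++ₛ cons true (cons false (u' ++ₛ σ)) := by
        intro σ; rw [Stream'.append_append_stream]; simp [Stream'.cons_append_stream]
      by_cases hρ : ∃ ρ, η = cons false (cons true (u' ++ₛ ρ))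
      · obtain ⟨ρ, rfl⟩ := hρ
        rw [← key, hyta, key (y ρ), key ρ, hxsa, hxsa, hx01, hx01,
          ← key' (y ρ), ← key' ρ, hyt'a]
      · have h1 : yt (s ++ₛ η) = s ++ₛ η := by
          refine hytb _ ?_
          rintro ⟨ρ, hρ2⟩
          rw [key] at hρ2
          exact hρ ⟨ρ, apps_cancel s hρ2⟩
        rw [h1, hxsa]
        refine (hyt'b _ ?_).symm
        rintro ⟨ρ, hρ2⟩
        rw [key'] at hρ2
        have hx := apps_cancel s hρ2
        obtain ⟨b1, η1, rfl⟩ := stream_split η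
        cases b1
        · obtain ⟨b2, η2, rfl⟩ := stream_split η1
          cases b2
          · rw [hx00] at hx
            simpa using congrArg Stream'.head hx
          · rw [hx01] at hx
            have := congrArg Stream'.tail (congrArg Stream'.tail hx)
            simp only [Stream'.tail_cons] at this
            exact hρ ⟨ρ, by rw [this]⟩
        · rw [hx1] at hx
          have := congrArg Stream'.head (congrArg Stream'.tail hx)
          simp at this
    · -- u = tt :: u'
      have key : ∀ σ : Stream' Bool,
          (s ++ (true :: u')) ++ₛ σ = s ++ₛ cons true (u' ++ₛ σ) := by
        intro σ; rw [Stream'.append_append_stream]; simp [Stream'.cons_append_stream]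
      have key' : ∀ σ : Stream' Bool,
          (s ++ (true :: true :: u')) ++ₛ σ = s ++ₛ cons true (cons true (u' ++ₛ σ)) := by
        intro σ; rw [Stream'.append_append_stream]; simp [Stream'.cons_append_stream]
      by_cases hρ : ∃ ρ, η = cons true (u' ++ₛ ρ)
      · obtain ⟨ρ, rfl⟩ := hρ
        rw [← key, hyta, key (y ρ), key ρ, hxsa, hxsa, hx1, hx1,
          ← key' (y ρ), ← key' ρ, hyt'a]
      · have h1 : yt (s ++ₛ η) = s ++ₛ η := by
          refine hytb _ ?_
          rintro ⟨ρ, hρ2⟩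
          rw [key] at hρ2
          exact hρ ⟨ρ, apps_cancel s hρ2⟩
        rw [h1, hxsa]
        refine (hyt'b _ ?_).symm
        rintro ⟨ρ, hρ2⟩
        rw [key'] at hρ2
        have hx := apps_cancel s hρ2
        obtain ⟨b1, η1, rfl⟩ := stream_split η
        cases b1
        · obtain ⟨b2, η2, rfl⟩ := stream_split η1
          cases b2
          · rw [hx00] at hx
            simpa using congrArg Stream'.head hx
          · rw [hx01] at hx
            have := congrArg Stream'.head (congrArg Stream'.tail hx)
            simp at this
        · rw [hx1] at hx
          have := congrArg Stream'.tail hx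
          simp only [Stream'.tail_cons] at this
          exact hρ ⟨ρ, this⟩
  · have hw : ∃ w, t' = s ++ w := by
      rcases hu with ⟨_, h⟩ | ⟨_, h⟩ | ⟨_, h⟩ <;> exact ⟨_, h⟩
    obtain ⟨w, hw⟩ := hw
    have h1 : yt ξ = ξ := by
      refine hytb _ ?_
      rintro ⟨ρ, hρ⟩
      exact hs ⟨u ++ₛ ρ, by rw [hρ, ht, Stream'.append_append_stream]⟩
    have h2 : xs ξ = ξ := hxsb _ hs
    have h3 : yt' ξ = ξ := by
      refine hyt'b _ ?_
      rintro ⟨ρ, hρ⟩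
      exact hs ⟨w ++ₛ ρ, by rw [hρ, hw, Stream'.append_append_stream]⟩
    rw [h1, h2, h3]
end

section
/- The corecursively defined map y : 2^ℕ → 2^ℕ (given by y(0⁀0⁀η) = 0⁀y(η), y(0⁀1⁀η) = 1⁀0⁀y⁻¹(η), y(1⁀η) = 1⁀1⁀y(η), with y⁻¹ its inverse defined by the inverse substitutions) is strictly monotone for the lexicographic order on infinite binary sequences: ξ <_lex η implies y(ξ) <_lex y(η). -/
open Stream'

/-- The lexicographic (strict) order on infinite binary sequences: `ξ <_lex η` iff at the
least index where they differ, `ξ` has `0` and `η` has `1`. -/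
def LtLexStream (ξ η : Stream' Bool) : Prop :=
  ∃ i, (∀ j < i, ξ.get j = η.get j) ∧ ξ.get i = false ∧ η.get i = true

@[simp] lemma myGetConsZero {α} (a : α) (s : Stream' α) : (cons a s).get 0 = a := rfl

@[simp] lemma myGetConsSucc {α} (a : α) (s : Stream' α) (n : ℕ) :
    (cons a s).get (n + 1) = s.get n := rfl

lemma myEta2 {α} (s : Stream' α) : s = cons (s.get 0) (cons (s.get 1) s.tail.tail) := by
  funext n
  match n with
  | 0 => rfl
  | 1 => rfl
  | (n+2) => rfl

lemma ltLex_cons (b : Bool) {ξ η : Stream' Bool} (h : LtLexStream ξ η) :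
    LtLexStream (cons b ξ) (cons b η) := by
  obtain ⟨i, h1, h2, h3⟩ := h
  refine ⟨i + 1, ?_, by simpa using h2, by simpa using h3⟩
  intro j hj
  match j with
  | 0 => rfl
  | (k+1) => simpa using h1 k (by omega)

/-- The corecursively defined map `y` is strictly monotone for the lexicographic order on
infinite binary sequences. -/
theorem y_strictMono_lex (y y' : Stream' Bool → Stream' Bool)
    (hy00 : ∀ η, y (cons false (cons false η)) = cons false (y η))
    (hy01 : ∀ η, y (cons false (cons true η)) = cons true (cons false (y' η)))
    (hy1 : ∀ η, y (cons true η) = cons true (cons true (y η)))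
    (hz0 : ∀ η, y' (cons false η) = cons false (cons false (y' η)))
    (hz10 : ∀ η, y' (cons true (cons false η)) = cons false (cons true (y η)))
    (hz11 : ∀ η, y' (cons true (cons true η)) = cons true (y' η)) :
    ∀ ξ η : Stream' Bool, LtLexStream ξ η → LtLexStream (y ξ) (y η) := by
  have key : ∀ i : ℕ,
      (∀ ξ η : Stream' Bool, (∀ j < i, ξ.get j = η.get j) → ξ.get i = false →
        η.get i = true → LtLexStream (y ξ) (y η)) ∧
      (∀ ξ η : Stream' Bool, (∀ j < i, ξ.get j = η.get j) → ξ.get i = false →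
        η.get i = true → LtLexStream (y' ξ) (y' η)) := by
    intro i
    induction i using Nat.strong_induction_on with
    | _ i IH =>
      constructor
      · -- the statement for y
        intro ξ η hagree hξ hη
        obtain ⟨a, b, ξ', rfl⟩ : ∃ a b t, ξ = cons a (cons b t) := ⟨_, _, _, myEta2 ξ⟩
        obtain ⟨a', b', η', rfl⟩ : ∃ a b t, η = cons a (cons b t) := ⟨_, _, _, myEta2 η⟩
        match i with
        | 0 =>
          simp only [myGetConsZero] at hξ hη
          subst hξ; subst hη
          cases b with
          | false =>
            rw [hy00, hy1]
            exact ⟨0, fun j hj => absurd hj (Nat.not_lt_zero j), rfl, rfl⟩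
          | true =>
            rw [hy01, hy1]
            refine ⟨1, ?_, rfl, rfl⟩
            intro j hj
            obtain rfl : j = 0 := by omega
            rfl
        | 1 =>
          simp only [myGetConsSucc, myGetConsZero] at hξ hη
          subst hξ; subst hη
          have ha : a = a' := by simpa using hagree 0 (by omega)
          subst ha
          cases a with
          | false =>
            rw [hy00, hy01]
            exact ⟨0, fun j hj => absurd hj (Nat.not_lt_zero j), rfl, rfl⟩
          | true =>
            rw [hy1, hy1]
            refine ltLex_cons true (ltLex_cons true ?_)
            refine ((IH 0 (by omega)).1 (cons false ξ') (cons true η')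
              (fun j hj => absurd hj (Nat.not_lt_zero j)) rfl rfl)
        | (m+2) =>
          simp only [myGetConsSucc] at hξ hη
          have ha : a = a' := by simpa using hagree 0 (by omega)
          have hb : b = b' := by simpa using hagree 1 (by omega)
          subst ha; subst hb
          have ht : ∀ j < m, ξ'.get j = η'.get j := fun j hj => by
            simpa using hagree (j + 2) (by omega)
          cases a with
          | true =>
            rw [hy1, hy1]
            refine ltLex_cons true (ltLex_cons true ?_)
            refine (IH (m+1) (by omega)).1 (cons b ξ') (cons b η') ?_
              (by simpa using hξ) (by simpa using hη)
            intro j hj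
            match j with
            | 0 => rfl
            | (k+1) => simpa using ht k (by omega)
          | false =>
            cases b with
            | false =>
              rw [hy00, hy00]
              exact ltLex_cons false ((IH m (by omega)).1 ξ' η' ht hξ hη)
            | true =>
              rw [hy01, hy01]
              exact ltLex_cons true (ltLex_cons false ((IH m (by omega)).2 ξ' η' ht hξ hη))
      · -- the statement for y'
        intro ξ η hagree hξ hη
        obtain ⟨a, b, ξ', rfl⟩ : ∃ a b t, ξ = cons a (cons b t) := ⟨_, _, _, myEta2 ξ⟩
        obtain ⟨a', b', η', rfl⟩ : ∃ a b t, η = cons a (cons b t) := ⟨_, _, _, myEta2 η⟩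
        match i with
        | 0 =>
          simp only [myGetConsZero] at hξ hη
          subst hξ; subst hη
          rw [hz0]
          cases b' with
          | false =>
            rw [hz10]
            refine ⟨1, ?_, rfl, rfl⟩
            intro j hj
            obtain rfl : j = 0 := by omega
            rfl
          | true =>
            rw [hz11]
            exact ⟨0, fun j hj => absurd hj (Nat.not_lt_zero j), rfl, rfl⟩
        | 1 =>
          simp only [myGetConsSucc, myGetConsZero] at hξ hη
          subst hξ; subst hη
          have ha : a = a' := by simpa using hagree 0 (by omega)
          subst ha
          cases a with
          | false =>
            rw [hz0 (cons false ξ'), hz0 (cons true η')]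
            refine ltLex_cons false (ltLex_cons false ?_)
            exact (IH 0 (by omega)).2 (cons false ξ') (cons true η')
              (fun j hj => absurd hj (Nat.not_lt_zero j)) rfl rfl
          | true =>
            rw [hz10, hz11]
            exact ⟨0, fun j hj => absurd hj (Nat.not_lt_zero j), rfl, rfl⟩
        | (m+2) =>
          simp only [myGetConsSucc] at hξ hη
          have ha : a = a' := by simpa using hagree 0 (by omega)
          have hb : b = b' := by simpa using hagree 1 (by omega)
          subst ha; subst hb
          have ht : ∀ j < m, ξ'.get j = η'.get j := fun j hj => by
            simpa using hagree (j + 2) (by omega)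
          cases a with
          | false =>
            rw [hz0 (cons b ξ'), hz0 (cons b η')]
            refine ltLex_cons false (ltLex_cons false ?_)
            refine (IH (m+1) (by omega)).2 (cons b ξ') (cons b η') ?_
              (by simpa using hξ) (by simpa using hη)
            intro j hj
            match j with
            | 0 => rfl
            | (k+1) => simpa using ht k (by omega)
          | true =>
            cases b with
            | false =>
              rw [hz10, hz10]
              exact ltLex_cons false (ltLex_cons true ((IH m (by omega)).1 ξ' η' ht hξ hη))
            | true =>
              rw [hz11, hz11]
              exact ltLex_cons true ((IH m (by omega)).2 ξ' η' ht hξ hη)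
  rintro ξ η ⟨i, h1, h2, h3⟩
  exact (key i).1 ξ η h1 h2 h3
end
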